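/- arXiv:math/0404313 — 7 statements merged into one kernel-verified Lean document; each statement's English description precedes it below -/
import Mathlib

section
/- There is a unique R-bilinear bracket on the A-module A ⊗_R 𝔤₀ satisfying ⁅a ⊗ ξ, b ⊗ η⁆ = (a·b) ⊗ ⁅ξ, η⁆ + (a · #(ξ)(b)) ⊗ η − (b · #(η)(a)) ⊗ ξ on pure tensors, and this bracket makes A ⊗_R 𝔤₀ into a Lie–Rinehart algebra over A: it is an R-Lie algebra bracket (alternating and satisfying the Jacobi identity), the A-linear map ρ : A ⊗_R 𝔤₀ → Der_R(A) determined by ρ(a ⊗ ξ) = a • #(ξ) is an R-Lie algebra homomorphism, and the Leibniz rule ⁅x, a • y⁆ = a • ⁅x, y⁆ + ρ(x)(a) • y holds for all x, y ∈ A ⊗_R 𝔤₀ and a ∈ A. (This is the action Lie algebroid 𝔤₀ × M associated to an infinitesimal action, equation (ghj) of Section 2.1.) -/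
open scoped TensorProduct

section ActionAlgebroidAux

variable {R A : Type*} [CommRing R] [CommRing A] [Algebra R A]
variable {g₀ : Type*} [LieRing g₀] [LieAlgebra R g₀]

/-- The pure-tensor embedding `v ↦ 1 ⊗ v`. -/
noncomputable def actionEmb (R A : Type*) [CommRing R] [CommRing A] [Algebra R A]
    (g₀ : Type*) [LieRing g₀] [LieAlgebra R g₀] : g₀ →ₗ[R] A ⊗[R] g₀ :=
  TensorProduct.mk R A g₀ 1

lemma actionEmb_eq (c : A) (v : g₀) : c ⊗ₜ[R] v = c • actionEmb R A g₀ v := by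
  show _ = c • ((1:A) ⊗ₜ[R] v)
  rw [TensorProduct.smul_tmul', smul_eq_mul, mul_one]

lemma der_bracket_smul (a b : A) (D E : Derivation R A A) :
    ⁅a • D, b • E⁆ = (a * b) • ⁅D, E⁆ + (a * D b) • E - (b * E a) • D := by
  ext c
  simp [Derivation.commutator_apply]
  ring

variable (anchor : g₀ →ₗ⁅R⁆ Derivation R A A)

/-- Inner bilinear piece of the action-algebroid bracket. -/
noncomputable def actionInnerB (a : A) (ξ : g₀) : A ⊗[R] g₀ →ₗ[R] A ⊗[R] g₀ :=
  TensorProduct.lift <| LinearMap.mk₂ R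
    (fun b η => (a * b) ⊗ₜ[R] ⁅ξ, η⁆ + (a * anchor ξ b) ⊗ₜ[R] η - (b * anchor η a) ⊗ₜ[R] ξ)
    (fun b b' η => by simp [mul_add, TensorProduct.add_tmul, TensorProduct.tmul_add, add_mul]; try module)
    (fun r b η => by
      simp [Algebra.mul_smul_comm, TensorProduct.smul_tmul', TensorProduct.tmul_smul, smul_sub, smul_add]
      try module)
    (fun b η η' => by simp [mul_add, TensorProduct.add_tmul, TensorProduct.tmul_add, add_mul]; try module)
    (fun r b η => by
      simp [Algebra.mul_smul_comm, TensorProduct.smul_tmul', TensorProduct.tmul_smul, smul_sub, smul_add]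
      try module)

/-- The action-algebroid bracket as a bilinear map. -/
noncomputable def actionFullB : (A ⊗[R] g₀) →ₗ[R] (A ⊗[R] g₀) →ₗ[R] (A ⊗[R] g₀) :=
  TensorProduct.lift <| LinearMap.mk₂ R (actionInnerB anchor)
    (fun a a' ξ => by
      apply TensorProduct.ext'; intro b η
      simp [actionInnerB, mul_add, add_mul, TensorProduct.add_tmul, TensorProduct.tmul_add]
      try module)
    (fun r a ξ => by
      apply TensorProduct.ext'; intro b η
      simp [actionInnerB, Algebra.mul_smul_comm, Algebra.smul_mul_assoc, TensorProduct.smul_tmul',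
        smul_sub, smul_add]
      try module)
    (fun a ξ ξ' => by
      apply TensorProduct.ext'; intro b η
      simp [actionInnerB, mul_add, add_mul, TensorProduct.add_tmul, TensorProduct.tmul_add]
      try module)
    (fun r a ξ => by
      apply TensorProduct.ext'; intro b η
      simp [actionInnerB, Algebra.mul_smul_comm, Algebra.smul_mul_assoc, TensorProduct.smul_tmul',
        TensorProduct.tmul_smul, smul_sub, smul_add]
      try module)

@[simp] lemma actionFullB_tmul (a b : A) (ξ η : g₀) :
    actionFullB anchor (a ⊗ₜ[R] ξ) (b ⊗ₜ[R] η) =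
      (a * b) ⊗ₜ[R] ⁅ξ, η⁆ + (a * anchor ξ b) ⊗ₜ[R] η - (b * anchor η a) ⊗ₜ[R] ξ := rfl

end ActionAlgebroidAux

/-- There is a unique `R`-bilinear bracket on `A ⊗[R] 𝔤₀` satisfying
`⁅a ⊗ ξ, b ⊗ η⁆ = (a·b) ⊗ ⁅ξ, η⁆ + (a · #ξ(b)) ⊗ η − (b · #η(a)) ⊗ ξ`, and this bracket
makes `A ⊗[R] 𝔤₀` into a Lie–Rinehart algebra over `A` (the action Lie algebroid). -/
theorem action_lie_algebroid_exists_unique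
    {R A : Type*} [CommRing R] [CommRing A] [Algebra R A]
    {g₀ : Type*} [LieRing g₀] [LieAlgebra R g₀]
    (anchor : g₀ →ₗ⁅R⁆ Derivation R A A) :
    (∃! B : (A ⊗[R] g₀) →ₗ[R] (A ⊗[R] g₀) →ₗ[R] (A ⊗[R] g₀),
        ∀ (a b : A) (ξ η : g₀),
          B (a ⊗ₜ[R] ξ) (b ⊗ₜ[R] η) =
            (a * b) ⊗ₜ[R] ⁅ξ, η⁆ + (a * anchor ξ b) ⊗ₜ[R] η - (b * anchor η a) ⊗ₜ[R] ξ) ∧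
    (∀ B : (A ⊗[R] g₀) →ₗ[R] (A ⊗[R] g₀) →ₗ[R] (A ⊗[R] g₀),
      (∀ (a b : A) (ξ η : g₀),
          B (a ⊗ₜ[R] ξ) (b ⊗ₜ[R] η) =
            (a * b) ⊗ₜ[R] ⁅ξ, η⁆ + (a * anchor ξ b) ⊗ₜ[R] η - (b * anchor η a) ⊗ₜ[R] ξ) →
        -- alternating
        ((∀ x : A ⊗[R] g₀, B x x = 0) ∧
        -- Jacobi identity
        (∀ x y z : A ⊗[R] g₀, B x (B y z) + B y (B z x) + B z (B x y) = 0) ∧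
        -- the anchor `ρ(a ⊗ ξ) = a • #ξ` is a Lie algebra homomorphism, and Leibniz holds
        (∀ ρ : (A ⊗[R] g₀) →ₗ[A] Derivation R A A,
          (∀ (a : A) (ξ : g₀), ρ (a ⊗ₜ[R] ξ) = a • anchor ξ) →
            ((∀ x y : A ⊗[R] g₀, ρ (B x y) = ⁅ρ x, ρ y⁆) ∧
             (∀ (x : A ⊗[R] g₀) (a : A) (y : A ⊗[R] g₀),
                B x (a • y) = a • B x y + ρ x a • y))))) := by
  constructor
  · -- existence and uniqueness
    refine ⟨actionFullB anchor, fun a b ξ η => rfl, ?_⟩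
    intro C hC
    apply TensorProduct.ext'; intro a ξ
    apply TensorProduct.ext'; intro b η
    rw [hC, actionFullB_tmul]
  · -- properties
    intro B hB
    have skew : ∀ x y : A ⊗[R] g₀, B x y + B y x = 0 := by
      intro x y
      induction x using TensorProduct.induction_on with
      | zero => simp
      | tmul a ξ =>
        induction y using TensorProduct.induction_on with
        | zero => simp
        | tmul b η =>
          rw [hB, hB, show ⁅η, ξ⁆ = -⁅ξ, η⁆ from (lie_skew η ξ).symm, mul_comm b a]
          simp only [TensorProduct.tmul_neg]
          abel
        | add p q hp hq =>
          simp only [map_add, LinearMap.add_apply]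
          rw [add_add_add_comm, hp, hq, add_zero]
      | add p q hp hq =>
        simp only [map_add, LinearMap.add_apply]
        rw [add_add_add_comm, hp, hq, add_zero]
    have alt : ∀ x : A ⊗[R] g₀, B x x = 0 := by
      intro x
      induction x using TensorProduct.induction_on with
      | zero => simp
      | tmul a ξ => rw [hB]; simp
      | add p q hp hq =>
        simp only [map_add, LinearMap.add_apply]
        rw [hp, hq, zero_add, add_zero, add_comm]
        exact skew p q
    have jac0 : ∀ (a b c : A) (ξ η ζ : g₀),
        B (a ⊗ₜ[R] ξ) (B (b ⊗ₜ[R] η) (c ⊗ₜ[R] ζ)) +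
        B (b ⊗ₜ[R] η) (B (c ⊗ₜ[R] ζ) (a ⊗ₜ[R] ξ)) +
        B (c ⊗ₜ[R] ζ) (B (a ⊗ₜ[R] ξ) (b ⊗ₜ[R] η)) = 0 := by
      intro a b c ξ η ζ
      have h3 : ⁅η, ξ⁆ = -⁅ξ, η⁆ := (lie_skew η ξ).symm
      have h4 : ⁅ζ, ξ⁆ = -⁅ξ, ζ⁆ := (lie_skew ζ ξ).symm
      have h5 : ⁅ζ, η⁆ = -⁅η, ζ⁆ := (lie_skew ζ η).symm
      have h1 : ⁅η, ⁅ζ, ξ⁆⁆ = -⁅η, ⁅ξ, ζ⁆⁆ := by rw [h4, lie_neg]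
      have h2 : ⁅ζ, ⁅ξ, η⁆⁆ = ⁅η, ⁅ξ, ζ⁆⁆ - ⁅ξ, ⁅η, ζ⁆⁆ := by
        have hs : -⁅ζ, ⁅ξ, η⁆⁆ = ⁅⁅ξ, η⁆, ζ⁆ := lie_skew _ _
        rw [lie_lie] at hs
        rw [← neg_neg ⁅ζ, ⁅ξ, η⁆⁆, hs]; abel
      simp only [hB, map_add, map_sub, LinearMap.sub_apply, LinearMap.add_apply,
        LieHom.map_lie, Derivation.commutator_apply, Derivation.leibniz, smul_eq_mul,
        map_neg, map_mul, LinearMap.neg_apply]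
      simp only [hB, h1, h2, h3, h4, h5, lie_neg, neg_lie, TensorProduct.tmul_neg,
        TensorProduct.tmul_sub, TensorProduct.tmul_add, LieHom.map_lie,
        Derivation.commutator_apply, Derivation.leibniz, smul_eq_mul]
      simp only [actionEmb_eq]
      module
    refine ⟨alt, ?_, ?_⟩
    · -- Jacobi
      intro x y z
      induction x using TensorProduct.induction_on with
      | zero => simp
      | add p q hp hq =>
        simp only [map_add, LinearMap.add_apply]
        have h := congrArg₂ HAdd.hAdd hp hq
        rw [add_zero] at h
        rw [← h]; abel
      | tmul a ξ =>
        induction y using TensorProduct.induction_on with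
        | zero => simp
        | add p q hp hq =>
          simp only [map_add, LinearMap.add_apply]
          have h := congrArg₂ HAdd.hAdd hp hq
          rw [add_zero] at h
          rw [← h]; abel
        | tmul b η =>
          induction z using TensorProduct.induction_on with
          | zero => simp
          | add p q hp hq =>
            simp only [map_add, LinearMap.add_apply]
            have h := congrArg₂ HAdd.hAdd hp hq
            rw [add_zero] at h
            rw [← h]; abel
          | tmul c ζ => exact jac0 a b c ξ η ζ
    · -- anchor is a Lie hom + Leibniz
      intro ρ hρ
      constructor
      · intro x y
        induction x using TensorProduct.induction_on with
        | zero => simp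
        | add p q hp hq =>
          simp only [map_add, LinearMap.add_apply, add_lie]
          rw [hp, hq]
        | tmul a ξ =>
          induction y using TensorProduct.induction_on with
          | zero => simp
          | add p q hp hq =>
            simp only [map_add, lie_add]
            rw [hp, hq]
          | tmul b η =>
            rw [hB, map_sub, map_add, hρ, hρ, hρ, hρ, hρ, der_bracket_smul,
              ← LieHom.map_lie]
      · intro x a y
        induction x using TensorProduct.induction_on with
        | zero => simp
        | add p q hp hq =>
          simp only [map_add, LinearMap.add_apply, Derivation.add_apply, add_smul, smul_add]
          rw [hp, hq]; abel
        | tmul b ξ =>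
          induction y using TensorProduct.induction_on with
          | zero => simp
          | add p q hp hq =>
            simp only [smul_add, map_add]
            rw [hp, hq]; abel
          | tmul c η =>
            rw [show a • (c ⊗ₜ[R] η) = (a * c) ⊗ₜ[R] η from by
              rw [TensorProduct.smul_tmul', smul_eq_mul], hB, hB, hρ]
            simp only [Derivation.leibniz, smul_eq_mul, Derivation.smul_apply]
            simp only [actionEmb_eq]
            module
end

section
/- The assignment X ↦ κ_X is a Lie algebra representation of L on Hom_A(Der_R(A), L): for all X, Y ∈ L and all φ ∈ Hom_A(Der_R(A), L), κ_{⁅X,Y⁆} φ = κ_X (κ_Y φ) − κ_Y (κ_X φ). (Lemma 5.1.) -/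
variable {R A L : Type*} [CommRing R] [CommRing A] [Algebra R A]
  [LieRing L] [LieAlgebra R L] [Module A L]
  [IsScalarTower R A L] [SMulCommClass R A L] [SMulCommClass A R L]

/-- `X ↦ κ_X` is a Lie algebra representation of `L` on
`Hom_A(Der_R(A), L)`: `κ_{⁅X,Y⁆} φ = κ_X (κ_Y φ) − κ_Y (κ_X φ)`. -/
theorem kappa_is_representation
    (ρ : L →ₗ[A] Derivation R A A)
    (hanchor : ∀ X Y : L, ρ ⁅X, Y⁆ = ⁅ρ X, ρ Y⁆)
    (hleib : ∀ (X : L) (a : A) (Y : L), ⁅X, a • Y⁆ = a • ⁅X, Y⁆ + ρ X a • Y)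
    (κ : L → (Derivation R A A →ₗ[A] L) → (Derivation R A A →ₗ[A] L))
    (hκ : ∀ (X : L) (φ : Derivation R A A →ₗ[A] L) (V : Derivation R A A),
      κ X φ V = ⁅X, φ V⁆ + φ ⁅V, ρ X⁆) :
    ∀ (X Y : L) (φ : Derivation R A A →ₗ[A] L),
      κ ⁅X, Y⁆ φ = κ X (κ Y φ) - κ Y (κ X φ) := by
  intro X Y φ
  ext V
  simp only [LinearMap.sub_apply, hκ, hanchor, lie_add, map_add]
  have h : (⁅V, ⁅ρ X, ρ Y⁆⁆ : Derivation R A A) = ⁅⁅V, ρ X⁆, ρ Y⁆ - ⁅⁅V, ρ Y⁆, ρ X⁆ := by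
    rw [lie_lie, ← lie_skew (ρ X) ⁅V, ρ Y⁆]
    abel
  rw [h, map_sub, lie_lie X Y (φ V)]
  abel
end

section
/- The bracket [φ₁, φ₂] := φ₂ ∘ (ρ ∘ φ₁) − φ₁ ∘ (ρ ∘ φ₂) makes Hom_A(Der_R(A), L) into a Lie algebra over R: it is R-bilinear, alternating, and satisfies the Jacobi identity. (This is the Lie algebra bundle structure on T*M ⊗ 𝔤, equation (bob) of Section 5.1.) -/
variable {R A L : Type*} [CommRing R] [CommRing A] [Algebra R A]
  [LieRing L] [LieAlgebra R L] [Module A L]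
  [IsScalarTower R A L] [SMulCommClass R A L] [SMulCommClass A R L]

/-- The bracket `[φ₁, φ₂] := φ₂ ∘ (ρ ∘ φ₁) − φ₁ ∘ (ρ ∘ φ₂)` on `Hom_A(Der_R(A), L)`. -/
def homBracket (ρ : L →ₗ[A] Derivation R A A)
    (φ₁ φ₂ : Derivation R A A →ₗ[A] L) : Derivation R A A →ₗ[A] L :=
  φ₂.comp (ρ.comp φ₁) - φ₁.comp (ρ.comp φ₂)

/-- The bracket `[φ₁, φ₂] := φ₂ ∘ (ρ ∘ φ₁) − φ₁ ∘ (ρ ∘ φ₂)` makes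
`Hom_A(Der_R(A), L)` a Lie algebra over `R`: it is `R`-bilinear, alternating, and
satisfies the Jacobi identity. -/
theorem homBracket_is_lie_algebra
    (ρ : L →ₗ[A] Derivation R A A)
    (hanchor : ∀ X Y : L, ρ ⁅X, Y⁆ = ⁅ρ X, ρ Y⁆)
    (hleib : ∀ (X : L) (a : A) (Y : L), ⁅X, a • Y⁆ = a • ⁅X, Y⁆ + ρ X a • Y) :
    -- additive in each argument
    (∀ φ₁ φ₂ ψ : Derivation R A A →ₗ[A] L,
        homBracket ρ (φ₁ + φ₂) ψ = homBracket ρ φ₁ ψ + homBracket ρ φ₂ ψ) ∧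
    (∀ φ ψ₁ ψ₂ : Derivation R A A →ₗ[A] L,
        homBracket ρ φ (ψ₁ + ψ₂) = homBracket ρ φ ψ₁ + homBracket ρ φ ψ₂) ∧
    -- R-homogeneous in each argument
    (∀ (r : R) (φ ψ : Derivation R A A →ₗ[A] L),
        homBracket ρ (r • φ) ψ = r • homBracket ρ φ ψ) ∧
    (∀ (r : R) (φ ψ : Derivation R A A →ₗ[A] L),
        homBracket ρ φ (r • ψ) = r • homBracket ρ φ ψ) ∧
    -- alternating
    (∀ φ : Derivation R A A →ₗ[A] L, homBracket ρ φ φ = 0) ∧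
    -- Jacobi identity
    (∀ φ₁ φ₂ φ₃ : Derivation R A A →ₗ[A] L,
        homBracket ρ φ₁ (homBracket ρ φ₂ φ₃) + homBracket ρ φ₂ (homBracket ρ φ₃ φ₁)
          + homBracket ρ φ₃ (homBracket ρ φ₁ φ₂) = 0) := by
  refine ⟨?_, ?_, ?_, ?_, ?_, ?_⟩
  · intro φ₁ φ₂ ψ; ext d; simp [homBracket]; abel
  · intro φ ψ₁ ψ₂; ext d; simp [homBracket]; abel
  · intro r φ ψ; ext d; simp [homBracket]; rw [smul_sub]
  · intro r φ ψ; ext d; simp [homBracket]; rw [smul_sub]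
  · intro φ; ext d; simp [homBracket]
  · intro φ₁ φ₂ φ₃; ext d; simp [homBracket]; abel
end

section
/- The bracket ⁅·,·⁆_J on J = L × Hom_A(Der_R(A), L) is an R-Lie algebra bracket: it is R-bilinear, alternating, and satisfies the Jacobi identity. (This realizes the Lie algebroid structure of the first jet bundle J¹𝔤 as a semidirect product of Γ(𝔤) and Γ(T*M ⊗ 𝔤), equation (alex) of Section 5.1.) -/
variable {R A L : Type*} [CommRing R] [CommRing A] [Algebra R A]
  [LieRing L] [LieAlgebra R L] [Module A L]
  [IsScalarTower R A L] [SMulCommClass R A L] [SMulCommClass A R L]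

/-- The bracket `⁅(X₁,φ₁),(X₂,φ₂)⁆_J := (⁅X₁,X₂⁆, [φ₁,φ₂] + κ_{X₁} φ₂ − κ_{X₂} φ₁)` on
`J = L × Hom_A(Der_R(A), L)`, given the operation `κ`. -/
def jetBracket (ρ : L →ₗ[A] Derivation R A A)
    (κ : L → (Derivation R A A →ₗ[A] L) → (Derivation R A A →ₗ[A] L))
    (p q : L × (Derivation R A A →ₗ[A] L)) : L × (Derivation R A A →ₗ[A] L) :=
  (⁅p.1, q.1⁆, homBracket ρ p.2 q.2 + κ p.1 q.2 - κ q.1 p.2)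

section Helpers
variable {R A L : Type*} [CommRing R] [CommRing A] [Algebra R A]
  [LieRing L] [LieAlgebra R L] [Module A L]
  [IsScalarTower R A L] [SMulCommClass R A L] [SMulCommClass A R L]

lemma der_lie_smul (r : R) (V W : Derivation R A A) : ⁅V, r • W⁆ = r • ⁅V, W⁆ :=
  lie_smul r V W

lemma map_lie_swap (f : Derivation R A A →ₗ[A] L) (a b : Derivation R A A) :
    f ⁅a, b⁆ = - f ⁅b, a⁆ := by
  rw [← lie_skew a b, map_neg]

lemma map_lie_jac (f : Derivation R A A →ₗ[A] L) (V b a : Derivation R A A) :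
    f ⁅V, ⁅b, a⁆⁆ = f ⁅b, ⁅V, a⁆⁆ - f ⁅a, ⁅V, b⁆⁆ := by
  rw [leibniz_lie V b a, ← lie_skew ⁅V, b⁆ a, map_add, map_neg]
  abel

end Helpers

set_option maxHeartbeats 2000000 in
/-- The bracket `⁅·,·⁆_J` on `J = L × Hom_A(Der_R(A), L)` is an
`R`-Lie algebra bracket: `R`-bilinear, alternating, and satisfies the Jacobi identity. -/
theorem jetBracket_is_lie_algebra
    (ρ : L →ₗ[A] Derivation R A A)
    (hanchor : ∀ X Y : L, ρ ⁅X, Y⁆ = ⁅ρ X, ρ Y⁆)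
    (hleib : ∀ (X : L) (a : A) (Y : L), ⁅X, a • Y⁆ = a • ⁅X, Y⁆ + ρ X a • Y)
    (κ : L → (Derivation R A A →ₗ[A] L) → (Derivation R A A →ₗ[A] L))
    (hκ : ∀ (X : L) (φ : Derivation R A A →ₗ[A] L) (V : Derivation R A A),
      κ X φ V = ⁅X, φ V⁆ + φ ⁅V, ρ X⁆) :
    -- additive in each argument
    (∀ p q s : L × (Derivation R A A →ₗ[A] L),
        jetBracket ρ κ (p + q) s = jetBracket ρ κ p s + jetBracket ρ κ q s) ∧
    (∀ p q s : L × (Derivation R A A →ₗ[A] L),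
        jetBracket ρ κ p (q + s) = jetBracket ρ κ p q + jetBracket ρ κ p s) ∧
    -- R-homogeneous in each argument
    (∀ (r : R) (p q : L × (Derivation R A A →ₗ[A] L)),
        jetBracket ρ κ (r • p) q = r • jetBracket ρ κ p q) ∧
    (∀ (r : R) (p q : L × (Derivation R A A →ₗ[A] L)),
        jetBracket ρ κ p (r • q) = r • jetBracket ρ κ p q) ∧
    -- alternating
    (∀ p : L × (Derivation R A A →ₗ[A] L), jetBracket ρ κ p p = 0) ∧
    -- Jacobi identity
    (∀ p q s : L × (Derivation R A A →ₗ[A] L),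
        jetBracket ρ κ p (jetBracket ρ κ q s) + jetBracket ρ κ q (jetBracket ρ κ s p)
          + jetBracket ρ κ s (jetBracket ρ κ p q) = 0) := by
  refine ⟨?_, ?_, ?_, ?_, ?_, ?_⟩
  · intro p q s
    refine Prod.ext ?_ ?_
    · simp [jetBracket, add_lie]
    · ext V
      simp [jetBracket, homBracket, hκ, add_lie, lie_add]
      abel
  · intro p q s
    refine Prod.ext ?_ ?_
    · simp [jetBracket, lie_add]
    · ext V
      simp [jetBracket, homBracket, hκ, add_lie, lie_add]
      abel
  · intro r p q
    refine Prod.ext ?_ ?_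
    · simp [jetBracket, smul_lie]
    · ext V
      simp [jetBracket, homBracket, hκ, smul_lie, lie_smul, der_lie_smul,
        LinearMap.map_smul_of_tower, smul_add, smul_sub]
  · intro r p q
    refine Prod.ext ?_ ?_
    · simp [jetBracket, lie_smul]
    · ext V
      simp [jetBracket, homBracket, hκ, smul_lie, lie_smul, der_lie_smul,
        LinearMap.map_smul_of_tower, smul_add, smul_sub]
  · intro p
    refine Prod.ext ?_ ?_
    · simp [jetBracket]
    · ext V
      simp [jetBracket, homBracket, hκ]
  · intro p q s
    refine Prod.ext ?_ ?_
    · simpa [jetBracket, add_assoc] using lie_jacobi p.1 q.1 s.1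
    · ext V
      simp only [jetBracket, homBracket, Prod.fst_add, Prod.snd_add, LinearMap.add_apply,
        LinearMap.sub_apply, LinearMap.comp_apply, Prod.fst_zero, Prod.snd_zero,
        LinearMap.zero_apply, hκ, hanchor, map_add, map_sub, lie_add, add_lie, lie_sub, sub_lie,
        lie_lie]
      simp only [map_lie_swap s.2 (ρ q.1) (ρ (p.2 V)),
        map_lie_swap q.2 (ρ s.1) (ρ (p.2 V)),
        map_lie_swap p.2 (ρ (s.2 V)) (ρ q.1),
        map_lie_swap p.2 (ρ (q.2 V)) (ρ s.1),
        map_lie_swap s.2 (ρ p.1) (ρ (q.2 V)),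
        map_lie_swap q.2 (ρ (s.2 V)) (ρ p.1),
        map_lie_jac s.2 V (ρ q.1) (ρ p.1),
        map_lie_jac q.2 V (ρ p.1) (ρ s.1),
        map_lie_jac p.2 V (ρ s.1) (ρ q.1)]
      abel
end

section
/- For (X, φ) ∈ J define the R-linear operator ad_{(X,φ)} : L → L by ad_{(X,φ)}(Y) := ⁅X, Y⁆ − φ(ρ(Y)). Then each ad_{(X,φ)} satisfies the Leibniz rule ad_{(X,φ)}(a • Y) = a • ad_{(X,φ)}(Y) + ρ(X)(a) • Y, and ad is a homomorphism from (J, ⁅·,·⁆_J) to operators with the commutator bracket: ad_{⁅ξ, η⁆_J} = ad_ξ ∘ ad_η − ad_η ∘ ad_ξ for all ξ, η ∈ J. (The adjoint representation of J¹𝔤 on 𝔤, Proposition 5.2.) -/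
variable {R A L : Type*} [CommRing R] [CommRing A] [Algebra R A]
  [LieRing L] [LieAlgebra R L] [Module A L]
  [IsScalarTower R A L] [SMulCommClass R A L] [SMulCommClass A R L]

/-- The adjoint operator `ad_{(X,φ)}(Y) := ⁅X, Y⁆ − φ(ρ(Y))`. -/
def adJet (ρ : L →ₗ[A] Derivation R A A)
    (p : L × (Derivation R A A →ₗ[A] L)) (Y : L) : L :=
  ⁅p.1, Y⁆ - p.2 (ρ Y)

/-- Each `ad_{(X,φ)}` satisfies the Leibniz rule
`ad_{(X,φ)}(a • Y) = a • ad_{(X,φ)}(Y) + ρ(X)(a) • Y`, and `ad` is a homomorphism from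
`(J, ⁅·,·⁆_J)` to operators with the commutator bracket. -/
theorem adjoint_representation
    (ρ : L →ₗ[A] Derivation R A A)
    (hanchor : ∀ X Y : L, ρ ⁅X, Y⁆ = ⁅ρ X, ρ Y⁆)
    (hleib : ∀ (X : L) (a : A) (Y : L), ⁅X, a • Y⁆ = a • ⁅X, Y⁆ + ρ X a • Y)
    (κ : L → (Derivation R A A →ₗ[A] L) → (Derivation R A A →ₗ[A] L))
    (hκ : ∀ (X : L) (φ : Derivation R A A →ₗ[A] L) (V : Derivation R A A),
      κ X φ V = ⁅X, φ V⁆ + φ ⁅V, ρ X⁆) :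
    -- the Leibniz rule
    (∀ (p : L × (Derivation R A A →ₗ[A] L)) (a : A) (Y : L),
        adJet ρ p (a • Y) = a • adJet ρ p Y + ρ p.1 a • Y) ∧
    -- ad is a homomorphism into operators with the commutator bracket
    (∀ (ξ η : L × (Derivation R A A →ₗ[A] L)) (Y : L),
        adJet ρ (jetBracket ρ κ ξ η) Y =
          adJet ρ ξ (adJet ρ η Y) - adJet ρ η (adJet ρ ξ Y)) := by
  constructor
  · intro p a Y
    simp only [adJet, hleib, map_smul, smul_sub]
    abel
  · intro ξ η Y
    simp only [adJet, jetBracket, homBracket, hκ, map_sub, map_add, LinearMap.sub_apply,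
      LinearMap.add_apply, LinearMap.comp_apply, hanchor, lie_lie, lie_sub, sub_lie]
    rw [show ⁅ρ Y, ρ ξ.1⁆ = -⁅ρ ξ.1, ρ Y⁆ from (lie_skew _ _).symm,
        show ⁅ρ Y, ρ η.1⁆ = -⁅ρ η.1, ρ Y⁆ from (lie_skew _ _).symm]
    simp only [map_neg]
    abel
end

section
/- For every R-bilinear ∇ : L × L → L and all X, Y, Z ∈ L: R∇(X, Y)Z = (∇*_Z T∇*)(X, Y) + R∇*(X, Z)Y + R∇*(Z, Y)X, where (∇*_Z T)(X, Y) := ∇*_Z(T(X, Y)) − T(∇*_Z X, Y) − T(X, ∇*_Z Y). (Equation (dual2) of Proposition 4.6, expressing the curvature of ∇ in terms of the torsion and curvature of its dual.) -/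
variable {R L : Type*} [CommRing R] [LieRing L] [LieAlgebra R L]

/-- The dual operation `∇*_X Y := ∇_Y X + ⁅X, Y⁆`. -/
def dualOp (f : L → L → L) (X Y : L) : L := f Y X + ⁅X, Y⁆

/-- The torsion `T∇(X, Y) := ∇_X Y − ∇_Y X − ⁅X, Y⁆`. -/
def torsionOp (f : L → L → L) (X Y : L) : L := f X Y - f Y X - ⁅X, Y⁆

/-- The curvature `R∇(X, Y)Z := ∇_X(∇_Y Z) − ∇_Y(∇_X Z) − ∇_{⁅X,Y⁆} Z`. -/
def curvOp (f : L → L → L) (X Y Z : L) : L := f X (f Y Z) - f Y (f X Z) - f ⁅X, Y⁆ Z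

/-- `f : L × L → L` is `R`-bilinear. -/
def IsBilin (R : Type*) {L : Type*} [CommRing R] [LieRing L] [LieAlgebra R L]
    (f : L → L → L) : Prop :=
  (∀ X Y Z : L, f (X + Y) Z = f X Z + f Y Z) ∧
  (∀ X Y Z : L, f X (Y + Z) = f X Y + f X Z) ∧
  (∀ (r : R) (X Y : L), f (r • X) Y = r • f X Y) ∧
  (∀ (r : R) (X Y : L), f X (r • Y) = r • f X Y)

/-- For every `R`-bilinear `∇ : L × L → L` and all `X, Y, Z`:
`R∇(X, Y)Z = (∇*_Z T∇*)(X, Y) + R∇*(X, Z)Y + R∇*(Z, Y)X`. -/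
theorem curvature_via_dual
    (f : L → L → L) (hf : IsBilin R f) :
    ∀ X Y Z : L,
      curvOp f X Y Z =
        (dualOp f Z (torsionOp (dualOp f) X Y)
          - torsionOp (dualOp f) (dualOp f Z X) Y
          - torsionOp (dualOp f) X (dualOp f Z Y))
        + curvOp (dualOp f) X Z Y + curvOp (dualOp f) Z Y X := by
  obtain ⟨h1, h2, h3, h4⟩ := hf
  have hn1 : ∀ X Y : L, f (-X) Y = -f X Y := by
    intro X Y
    have := h3 (-1 : R) X Y
    simpa using this
  have hn2 : ∀ X Y : L, f X (-Y) = -f X Y := by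
    intro X Y
    have := h4 (-1 : R) X Y
    simpa using this
  have hs1 : ∀ X Y Z : L, f (X - Y) Z = f X Z - f Y Z := by
    intro X Y Z
    rw [sub_eq_add_neg, h1, hn1, sub_eq_add_neg]
  have hs2 : ∀ X Y Z : L, f X (Y - Z) = f X Y - f X Z := by
    intro X Y Z
    rw [sub_eq_add_neg, h2, hn2, sub_eq_add_neg]
  intro X Y Z
  have e1 : f Y ⁅Z, X⁆ = - f Y ⁅X, Z⁆ := by rw [← lie_skew, hn2]
  simp only [curvOp, dualOp, torsionOp, hs1, hs2, h1, h2, add_lie, lie_add, sub_lie, lie_sub,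
    lie_self, lie_lie, e1, show ⁅f Y Z, X⁆ = -⁅X, f Y Z⁆ by rw [← lie_skew]]
  abel
end

section
/- Let ∇ : L × L → L be R-bilinear and suppose its dual ∇* is flat (R∇* = 0). Then ∇ is flat (R∇ = 0) if and only if the torsion T∇* is ∇*-parallel, i.e. ∇*_Z(T∇*(X, Y)) − T∇*(∇*_Z X, Y) − T∇*(X, ∇*_Z Y) = 0 for all X, Y, Z ∈ L. (Proposition 4.6(i).) -/
variable {R L : Type*} [CommRing R] [LieRing L] [LieAlgebra R L]

/-- If the dual `∇*` of an `R`-bilinear `∇` is flat, then `∇` is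
flat if and only if the torsion `T∇*` is `∇*`-parallel. -/
theorem flat_iff_torsion_parallel
    (f : L → L → L) (hf : IsBilin R f)
    (hflat : ∀ X Y Z : L, curvOp (dualOp f) X Y Z = 0) :
    (∀ X Y Z : L, curvOp f X Y Z = 0) ↔
      (∀ X Y Z : L,
        dualOp f Z (torsionOp (dualOp f) X Y)
          - torsionOp (dualOp f) (dualOp f Z X) Y
          - torsionOp (dualOp f) X (dualOp f Z Y) = 0) := by
  obtain ⟨ha1, ha2, hs1, hs2⟩ := hf
  have hn1 : ∀ X Y : L, f (-X) Y = - f X Y := fun X Y => by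
    simpa using hs1 (-1 : R) X Y
  have hn2 : ∀ X Y : L, f X (-Y) = - f X Y := fun X Y => by
    simpa using hs2 (-1 : R) X Y
  have hsub1 : ∀ X Y Z : L, f (X - Y) Z = f X Z - f Y Z := fun X Y Z => by
    rw [sub_eq_add_neg, ha1, hn1, sub_eq_add_neg]
  have hsub2 : ∀ X Y Z : L, f X (Y - Z) = f X Y - f X Z := fun X Y Z => by
    rw [sub_eq_add_neg, ha2, hn2, sub_eq_add_neg]
  have key : ∀ X Y Z : L,
      dualOp f Z (torsionOp (dualOp f) X Y)
          - torsionOp (dualOp f) (dualOp f Z X) Y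
          - torsionOp (dualOp f) X (dualOp f Z Y)
        = curvOp f X Y Z - curvOp (dualOp f) X Z Y + curvOp (dualOp f) Y Z X := by
    intro X Y Z
    have e1 : (⁅Z, X⁆ : L) = -⁅X, Z⁆ := (lie_skew Z X).symm
    have e2 : (⁅Z, Y⁆ : L) = -⁅Y, Z⁆ := (lie_skew Z Y).symm
    have e3 : (⁅f Y Z, X⁆ : L) = -⁅X, f Y Z⁆ := (lie_skew (f Y Z) X).symm
    simp only [dualOp, torsionOp, curvOp, ha1, ha2, hsub1, hsub2, hn1, hn2,
      add_lie, lie_add, sub_lie, lie_sub, neg_lie, lie_neg, lie_lie, e1, e2, e3]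
    abel
  constructor
  · intro h X Y Z
    rw [key, h, hflat, hflat]
    abel
  · intro h X Y Z
    have := h X Y Z
    rw [key, hflat, hflat] at this
    simpa using this
end
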